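/- For Algorithm 1, the excess loss of an expert over the rounds where it participates is bounded by its excess loss on any honest set: for every x ∈ X and every H ⊆ U, Σ_{t=1}^{T} z_t^x·(ℓ_t(x) − ℓ_t(p_t)) ≤ Σ_{t≤T : u_t∈H} (ℓ_t(x) − ℓ_t(p_t)) + 5·√(T·N). -/

import Mathlib

/-!
Fix the expert `x` and a user `v`, and write `g = ℓ(x) - ℓ(p)`, so `|g| ≤ 2`. On the rounds of `v`
the update reads `β ↦ β (1 - ε (1 - β) g)`, equivalently `1 - β ↦ (1 - β) (1 + ε β g)`: both `β`
and `1 - β` are multiplicative weights that start at `1/2` and never exceed `1`. Telescoping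
`log (1 + q) ≥ q - q²` therefore bounds `ε ∑ β g` both by `log 2 + ε² ∑ g²` and by
`ε ∑ g + log 2 + ε² ∑ g²`. Using the second bound for honest users and the first for the others,
and summing over the `N` users, leaves the slack `N log 2 / ε + 4 T ε = (log 2 + 4) √(T N)`.
-/

open Finset Real

lemma sub_sq_le_log_one_add {y : ℝ} (h1 : -(1 / 2) ≤ y) (h2 : y ≤ 1 / 2) :
    y - y ^ 2 ≤ log (1 + y) := by
  rw [Real.le_log_iff_exp_le (by linarith)]
  set s := y - y ^ 2 with hs
  have hs1 : |s| ≤ 1 := by rw [abs_le]; constructor <;> nlinarith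
  -- the fourth-order Taylor bound for `exp s`, a polynomial in `y`, is `≤ 1 + y` on `[-1/2, 1/2]`
  have htaylor := (abs_le.mp (Real.exp_bound hs1 (by norm_num : 0 < 4))).2
  simp only [sum_range_succ, sum_range_zero, Nat.factorial, ← abs_pow,
    abs_of_nonneg (by positivity : 0 ≤ s ^ 4)] at htaylor
  norm_num at htaylor
  nlinarith [sq_nonneg y, sq_nonneg (y * (y + 1 / 2)), sq_nonneg (y * (y - 1 / 2)),
    mul_nonneg (mul_nonneg (sq_nonneg y) (by linarith : (0 : ℝ) ≤ y + 1 / 2))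
      (by linarith : (0 : ℝ) ≤ 1 / 2 - y),
    mul_nonneg (mul_nonneg (pow_nonneg (sq_nonneg y) 2) (by linarith : (0 : ℝ) ≤ y + 1 / 2))
      (by linarith : (0 : ℝ) ≤ 1 / 2 - y)]

lemma sum_sub_sq_le_log_sub_log {F q : ℕ → ℝ} {m n : ℕ} (hmn : m ≤ n)
    (hF : ∀ t ∈ Ico m n, 0 < F t) (hq : ∀ t ∈ Ico m n, |q t| ≤ 1 / 2)
    (hstep : ∀ t ∈ Ico m n, F (t + 1) = F t * (1 + q t)) :
    ∑ t ∈ Ico m n, (q t - q t ^ 2) ≤ log (F n) - log (F m) := by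
  rw [← sum_Ico_sub (f := fun t => log (F t)) hmn]
  refine sum_le_sum fun t ht => ?_
  obtain ⟨hq₁, hq₂⟩ := abs_le.mp (hq t ht)
  rw [hstep t ht, log_mul (hF t ht).ne' (by linarith), add_sub_cancel_left]
  exact sub_sq_le_log_one_add hq₁ hq₂

lemma sum_le_log_two_add_sum_sq {F q : ℕ → ℝ} {T : ℕ} (hF1 : F 1 = 1 / 2)
    (hF : ∀ t ∈ Icc 1 (T + 1), 0 < F t) (hFT : F (T + 1) ≤ 1)
    (hq : ∀ t ∈ Icc 1 T, |q t| ≤ 1 / 2)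
    (hstep : ∀ t ∈ Icc 1 T, F (t + 1) = F t * (1 + q t)) :
    ∑ t ∈ Icc 1 T, q t ≤ log 2 + ∑ t ∈ Icc 1 T, q t ^ 2 := by
  rw [← Ico_add_one_right_eq_Icc] at hq hstep ⊢
  have hmw := sum_sub_sq_le_log_sub_log (by omega) (fun t ht => hF t (by simp at ht ⊢; omega))
    hq hstep
  have hlog : log (F (T + 1)) ≤ 0 := log_nonpos (hF _ (by simp)).le hFT
  rw [hF1, one_div, log_inv, sum_sub_distrib] at hmw
  linarith

section SleepingWeight

variable {F b r g : ℕ → ℝ} {c : ℝ} {T : ℕ}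

lemma mul_sum_mul_le_log_two_add (hF1 : F 1 = 1 / 2)
    (hF : ∀ t ∈ Icc 1 (T + 1), 0 < F t) (hFT : F (T + 1) ≤ 1)
    (hr : ∀ t ∈ Icc 1 T, 0 ≤ r t ∧ r t ≤ 1) (hcg : ∀ t ∈ Icc 1 T, |c * g t| ≤ 1 / 2)
    (hstep : ∀ t ∈ Icc 1 T, F (t + 1) = F t * (1 + c * r t * g t)) :
    c * ∑ t ∈ Icc 1 T, r t * g t ≤ log 2 + c ^ 2 * ∑ t ∈ Icc 1 T, g t ^ 2 := by
  have hq : ∀ t ∈ Icc 1 T, |c * r t * g t| ≤ |c * g t| := fun t ht => by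
    rw [mul_right_comm, abs_mul _ (r t), abs_of_nonneg (hr t ht).1]
    exact mul_le_of_le_one_right (abs_nonneg _) (hr t ht).2
  have hmw := sum_le_log_two_add_sum_sq hF1 hF hFT (fun t ht => (hq t ht).trans (hcg t ht)) hstep
  have hsq : ∑ t ∈ Icc 1 T, (c * r t * g t) ^ 2 ≤ ∑ t ∈ Icc 1 T, (c * g t) ^ 2 :=
    sum_le_sum fun t ht => sq_le_sq.mpr (hq t ht)
  simp only [mul_assoc, ← mul_sum, mul_pow] at hmw hsq
  linarith

lemma mul_sum_mul_le_min_add (hb1 : b 1 = 1 / 2) (hb : ∀ t ∈ Icc 1 (T + 1), 0 < b t ∧ b t < 1)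
    (hcg : ∀ t ∈ Icc 1 T, |c * g t| ≤ 1 / 2)
    (hstep : ∀ t ∈ Icc 1 T, b (t + 1) = b t * (1 - c * (1 - b t) * g t)) :
    c * ∑ t ∈ Icc 1 T, b t * g t ≤
      c * min 0 (∑ t ∈ Icc 1 T, g t) + log 2 + c ^ 2 * ∑ t ∈ Icc 1 T, g t ^ 2 := by
  have hb' : ∀ t ∈ Icc 1 T, 0 < b t ∧ b t < 1 := fun t ht => hb t (by simp at ht ⊢; omega)
  have hle_zero := mul_sum_mul_le_log_two_add (F := fun t => 1 - b t) (by simp [hb1]; norm_num)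
    (fun t ht => by linarith [hb t ht]) (by linarith [hb (T + 1) (by simp)])
    (fun t ht => ⟨(hb' t ht).1.le, (hb' t ht).2.le⟩) hcg (fun t ht => by rw [hstep t ht]; ring)
  have hle_sum := mul_sum_mul_le_log_two_add (F := b) (r := fun t => 1 - b t) (g := fun t => -g t)
    hb1 (fun t ht => (hb t ht).1) (hb (T + 1) (by simp)).2.le
    (fun t ht => ⟨by linarith [hb' t ht], by linarith [hb' t ht]⟩)
    (fun t ht => by rw [mul_neg, abs_neg]; exact hcg t ht) (fun t ht => by rw [hstep t ht]; ring)
  have hsplit : ∑ t ∈ Icc 1 T, b t * g t =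
      ∑ t ∈ Icc 1 T, g t + ∑ t ∈ Icc 1 T, (1 - b t) * -g t := by
    rw [← sum_add_distrib]; exact sum_congr rfl fun t _ => by ring
  simp only [neg_sq] at hle_sum
  rcases min_choice 0 (∑ t ∈ Icc 1 T, g t) with h | h
  · rw [h]; linarith
  · rw [h, hsplit, mul_add]; linarith

end SleepingWeight

lemma abs_sum_div_mul_le_one {ι : Type*} (s : Finset ι) {w f : ι → ℝ} {W : ℝ}
    (hw : ∀ i ∈ s, 0 ≤ w i) (hW : W = ∑ i ∈ s, w i) (hWpos : 0 < W) (hf : ∀ i ∈ s, |f i| ≤ 1) :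
    |∑ i ∈ s, w i / W * f i| ≤ 1 :=
  calc |∑ i ∈ s, w i / W * f i| ≤ ∑ i ∈ s, w i / W := by
        refine (abs_sum_le_sum_abs _ _).trans (sum_le_sum fun i hi => ?_)
        have hwi : 0 ≤ w i / W := div_nonneg (hw i hi) hWpos.le
        rw [abs_mul, abs_of_nonneg hwi]
        exact mul_le_of_le_one_right hwi (hf i hi)
    _ = 1 := by rw [← sum_div, ← hW, div_self hWpos.ne']

lemma sum_min_zero_le_sum_filter {ι U : Type*} [Fintype U] [DecidableEq U] (s : Finset ι)
    (u : ι → U) (H : Finset U) (g : ι → ℝ) :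
    ∑ v, min 0 (∑ i ∈ s with u i = v, g i) ≤ ∑ i ∈ s with u i ∈ H, g i := by
  rw [← sum_fiberwise_eq_sum_filter]
  exact (sum_le_sum_of_subset_of_nonpos' (subset_univ H) fun v _ _ => min_le_left _ _).trans
    (sum_le_sum fun v _ => min_le_right _ _)

lemma sqrt_div_le_quarter {N T : ℕ} (hTN : 16 * N ≤ T) : √((N : ℝ) / T) ≤ 1 / 4 := by
  rw [sqrt_le_left (by norm_num)]
  exact div_le_of_le_mul₀ (Nat.cast_nonneg _) (by norm_num) (by
    have : (16 * N : ℝ) ≤ T := by exact_mod_cast hTN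
    linarith)

lemma user_regret_le {U X : Type*} [DecidableEq U] (u : ℕ → U) (ℓ : ℕ → X → ℝ) (ℓp : ℕ → ℝ)
    (β : ℕ → X → U → ℝ) {c : ℝ} {T : ℕ} (x : X) (v : U) (hβ1 : β 1 x v = 1 / 2)
    (hβ : ∀ t, 1 ≤ t → 0 < β t x v ∧ β t x v < 1)
    (hcg : ∀ t ∈ Icc 1 T, |c * (ℓ t x - ℓp t)| ≤ 1 / 2)
    (hβu : ∀ t, 1 ≤ t → β (t + 1) x (u t) = β t x (u t) *
        (1 + c * ((β t x (u t) * ℓ t x + (1 - β t x (u t)) * ℓp t) - ℓ t x)))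
    (hβo : ∀ t, 1 ≤ t → v ≠ u t → β (t + 1) x v = β t x v) :
    c * ∑ t ∈ Icc 1 T with u t = v, β t x (u t) * (ℓ t x - ℓp t) ≤
      c * min 0 (∑ t ∈ Icc 1 T with u t = v, (ℓ t x - ℓp t)) + log 2 +
        c ^ 2 * ∑ t ∈ Icc 1 T with u t = v, (ℓ t x - ℓp t) ^ 2 := by
  have key := mul_sum_mul_le_min_add (b := fun t => β t x v) (c := c) (T := T)
    (g := fun t => if u t = v then ℓ t x - ℓp t else 0) hβ1 (fun t ht => hβ t (mem_Icc.mp ht).1)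
    (fun t ht => by split_ifs; exacts [hcg t ht, by simp])
    (fun t ht => by
      by_cases h : u t = v
      · simp only [h, if_true]; rw [← h, hβu t (mem_Icc.mp ht).1]; ring
      · simp only [h, if_false]; rw [hβo t (mem_Icc.mp ht).1 (Ne.symm h)]; ring)
  have hfiber : ∑ t ∈ Icc 1 T with u t = v, β t x (u t) * (ℓ t x - ℓp t) =
      ∑ t ∈ Icc 1 T with u t = v, β t x v * (ℓ t x - ℓp t) :=
    sum_congr rfl fun t ht => by rw [(mem_filter.mp ht).2]
  rw [hfiber]
  simpa only [mul_ite, mul_zero, ite_pow, ne_eq, OfNat.ofNat_ne_zero, not_false_eq_true,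
    zero_pow, ← sum_filter] using key

lemma log_two_budget_le {N T : ℝ} (hN : 0 < N) (hT : 0 < T) :
    N * log 2 + √(N / T) ^ 2 * (4 * T) ≤ √(N / T) * (5 * √(T * N)) := by
  have hsq : √(N / T) ^ 2 * T = N := by rw [sq_sqrt (by positivity)]; field_simp
  have hprod : √(N / T) * √(T * N) = N := by
    rw [← sqrt_mul (by positivity), show N / T * (T * N) = N ^ 2 by field_simp, sqrt_sq hN.le]
  have := log_two_lt_d9
  nlinarith

theorem algorithm1_reverse_lemma_general
    {U X : Type*} [Fintype U] [Fintype X] [DecidableEq U]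
    (N T : ℕ)
    (hcardU : Fintype.card U = N)
    (hN1 : 1 ≤ N)
    (hTN : 16 * N ≤ T)
    (u : ℕ → U) (ℓ : ℕ → X → ℝ)
    (hℓ : ∀ t x, -1 ≤ ℓ t x ∧ ℓ t x ≤ 1)
    (εB : ℝ)
    (hεB : εB = Real.sqrt ((N : ℝ) / T))
    (a : ℕ → X → ℝ) (β : ℕ → X → U → ℝ)
    (hβ1 : ∀ x v, β 1 x v = 1 / 2)
    (z : ℕ → X → ℝ) (hz : ∀ t x, z t x = β t x (u t))
    (w : ℕ → X → ℝ) (hw : ∀ t x, w t x = z t x * a t x)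
    (W : ℕ → ℝ) (hW : ∀ t, W t = ∑ x, w t x)
    (p : ℕ → X → ℝ) (hp : ∀ t x, p t x = w t x / W t)
    (ℓp : ℕ → ℝ) (hℓp : ∀ t, ℓp t = ∑ x, p t x * ℓ t x)
    (hβu : ∀ t x, 1 ≤ t →
      β (t + 1) x (u t) = β t x (u t) *
        (1 + εB * ((β t x (u t) * ℓ t x + (1 - β t x (u t)) * ℓp t) - ℓ t x)))
    (hβo : ∀ t x v, 1 ≤ t → v ≠ u t → β (t + 1) x v = β t x v)
    (hapos : ∀ t x, 1 ≤ t → 0 < a t x)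
    (hβpos : ∀ t x v, 1 ≤ t → 0 < β t x v ∧ β t x v < 1)
    (hWpos : ∀ t, 1 ≤ t → 0 < W t)
    (x : X) (H : Finset U) :
    ∑ t ∈ Finset.Icc 1 T, z t x * (ℓ t x - ℓp t) ≤
      (∑ t ∈ (Finset.Icc 1 T).filter (fun t => u t ∈ H), (ℓ t x - ℓp t))
        + 5 * Real.sqrt ((T : ℝ) * N) := by
  have hN : (0 : ℝ) < N := by exact_mod_cast hN1
  have hT : (0 : ℝ) < T := Nat.cast_pos.mpr (by omega)
  have hc : 0 < εB := hεB ▸ sqrt_pos.mpr (by positivity)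
  have hc4 : εB ≤ 1 / 4 := hεB ▸ sqrt_div_le_quarter hTN
  have hℓp_abs : ∀ t, 1 ≤ t → |ℓp t| ≤ 1 := fun t ht => by
    simp only [hℓp, hp]
    refine abs_sum_div_mul_le_one univ (fun y _ => ?_) (hW t) (hWpos t ht)
      fun y _ => abs_le.mpr (hℓ t y)
    rw [hw, hz]
    exact (mul_pos (hβpos t y (u t) ht).1 (hapos t y ht)).le
  have hgain : ∀ t ∈ Icc 1 T, |ℓ t x - ℓp t| ≤ 2 := fun t ht =>
    (abs_sub _ _).trans (by linarith [abs_le.mpr (hℓ t x), hℓp_abs t (mem_Icc.mp ht).1])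
  have hcg : ∀ t ∈ Icc 1 T, |εB * (ℓ t x - ℓp t)| ≤ 1 / 2 := fun t ht => by
    rw [abs_mul, abs_of_pos hc]
    nlinarith [hgain t ht, abs_nonneg (ℓ t x - ℓp t)]
  have hsum := sum_le_sum fun v (_ : v ∈ univ) => user_regret_le u ℓ ℓp β x v (hβ1 x v)
    (fun t ht => hβpos t x v ht) hcg (fun t ht => hβu t x ht) (fun t ht => hβo t x v ht)
  simp only [sum_add_distrib, ← mul_sum, sum_fiberwise, sum_const, card_univ, hcardU,
    nsmul_eq_mul] at hsum
  have hhonest := sum_min_zero_le_sum_filter (Icc 1 T) u H fun t => ℓ t x - ℓp t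
  have hsq : ∑ t ∈ Icc 1 T, (ℓ t x - ℓp t) ^ 2 ≤ 4 * T := by
    refine (sum_le_card_nsmul _ _ 4 fun t ht => ?_).trans_eq (by simp [mul_comm])
    have := abs_le.mp (hgain t ht)
    nlinarith
  have hbudget := hεB ▸ log_two_budget_le hN hT
  simp only [hz]
  refine le_of_mul_le_mul_left ?_ hc
  nlinarith

/-- For Algorithm 1, the excess loss of an expert over the rounds where
it participates is bounded by its excess loss on any honest set, up to 5·√(T·N). -/
theorem algorithm1_reverse_lemma
    {U X : Type*} [Fintype U] [Fintype X] [DecidableEq U]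
    (N M T : ℕ)
    (hcardU : Fintype.card U = N) (hcardX : Fintype.card X = M)
    (hN1 : 1 ≤ N) (hM2 : 2 ≤ M)
    (hTN : 16 * N ≤ T) (hTM : 16 * Real.log M ≤ (T : ℝ))
    (u : ℕ → U) (ℓ : ℕ → X → ℝ)
    (hℓ : ∀ t x, -1 ≤ ℓ t x ∧ ℓ t x ≤ 1)
    (εA εB : ℝ)
    (hεA : εA = Real.sqrt (Real.log M / T))
    (hεB : εB = Real.sqrt ((N : ℝ) / T))
    (a : ℕ → X → ℝ) (β : ℕ → X → U → ℝ)
    (ha1 : ∀ x, a 1 x = 1 / M)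
    (hβ1 : ∀ x v, β 1 x v = 1 / 2)
    (z : ℕ → X → ℝ) (hz : ∀ t x, z t x = β t x (u t))
    (w : ℕ → X → ℝ) (hw : ∀ t x, w t x = z t x * a t x)
    (W : ℕ → ℝ) (hW : ∀ t, W t = ∑ x, w t x)
    (p : ℕ → X → ℝ) (hp : ∀ t x, p t x = w t x / W t)
    (ℓp : ℕ → ℝ) (hℓp : ∀ t, ℓp t = ∑ x, p t x * ℓ t x)
    (ℓA : ℕ → X → ℝ)
    (hℓA : ∀ t x, ℓA t x = z t x * ℓ t x + (1 - z t x) * ℓp t)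
    (ha : ∀ t x, 1 ≤ t →
      a (t + 1) x = a t x * (1 + εA * ((∑ y, a t y * ℓA t y) - ℓA t x)))
    (hβu : ∀ t x, 1 ≤ t →
      β (t + 1) x (u t) = β t x (u t) *
        (1 + εB * ((β t x (u t) * ℓ t x + (1 - β t x (u t)) * ℓp t) - ℓ t x)))
    (hβo : ∀ t x v, 1 ≤ t → v ≠ u t → β (t + 1) x v = β t x v)
    (hapos : ∀ t x, 1 ≤ t → 0 < a t x)
    (hasum : ∀ t, 1 ≤ t → ∑ x, a t x = 1)
    (hβpos : ∀ t x v, 1 ≤ t → 0 < β t x v ∧ β t x v < 1)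
    (hWpos : ∀ t, 1 ≤ t → 0 < W t)
    (x : X) (H : Finset U) :
    ∑ t ∈ Finset.Icc 1 T, z t x * (ℓ t x - ℓp t) ≤
      (∑ t ∈ (Finset.Icc 1 T).filter (fun t => u t ∈ H), (ℓ t x - ℓp t))
        + 5 * Real.sqrt ((T : ℝ) * N) :=
  algorithm1_reverse_lemma_general N T hcardU hN1 hTN u ℓ hℓ εB hεB a β hβ1 z hz w hw W hW p hp ℓp
    hℓp hβu hβo hapos hβpos hWpos x H
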